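/- arXiv:2102.09065 — 3 statements merged into one kernel-verified Lean document; each statement's English description precedes it below -/
import Mathlib

section
/- Let r, k, c be positive integers with c ≥ 2, and let n be an integer with 1 ≤ n ≤ ((c-1)/c)·(1 + r + k). Then the quantum integer sin(nπ/(1+r+k)) / sin(π/(1+r+k)) is at least n/c. -/
open Real

noncomputable def qint (r k n : ℕ) : ℝ :=
  Real.sin (n * Real.pi / (1 + r + k)) / Real.sin (Real.pi / (1 + r + k))

/-!
On `[0, π]` the sine dominates the parabola `x (π - x) / π`. If `n x ≤ π - π / c`, the parabola at
`n x` is at least `n x / c`, so `sin (n x) ≥ n x / c ≥ n sin x / c`; with `x = π / (1 + r + k)`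
this is the bound on the quantum integer.
-/

theorem mul_pi_sub_div_pi_le_sin {x : ℝ} (hx₀ : 0 ≤ x) (hx : x ≤ π) :
    x * (π - x) / π ≤ sin x := by
  wlog hx₂ : x ≤ π / 2 generalizing x
  · have h := this (x := π - x) (by linarith) (by linarith) (by linarith)
    rwa [sin_pi_sub, show π - (π - x) = x by ring, mul_comm] at h
  have hπx : π * x ≤ 6 := by nlinarith [pi_lt_d2, pi_pos]
  rw [div_le_iff₀ pi_pos]
  nlinarith [sin_ge_sub_cube hx₀, mul_nonneg (sq_nonneg x) (sub_nonneg.2 hπx)]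

theorem div_le_sin_of_le_pi_sub_pi_div {t c : ℝ} (ht : 0 ≤ t) (hc : 0 < c)
    (htc : t ≤ π - π / c) : t / c ≤ sin t := by
  have hpic : 0 < π / c := div_pos pi_pos hc
  calc t / c = t * (π / c) / π := by field_simp
    _ ≤ t * (π - t) / π := by gcongr; linarith
    _ ≤ sin t := mul_pi_sub_div_pi_le_sin ht (by linarith)

theorem div_mul_sin_le_sin_mul {x m c : ℝ} (hx : 0 ≤ x) (hm : 0 ≤ m) (hc : 0 < c)
    (hmx : m * x ≤ π - π / c) : m / c * sin x ≤ sin (m * x) :=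
  calc m / c * sin x ≤ m / c * x := by gcongr; exact sin_le hx
    _ = m * x / c := by ring
    _ ≤ sin (m * x) := div_le_sin_of_le_pi_sub_pi_div (by positivity) hc hmx

theorem qint_lower_bound_general (r k c : ℕ) (hr : 0 < r) (hc : 2 ≤ c)
    (n : ℕ)
    (hn2 : (n : ℝ) ≤ (((c : ℝ) - 1) / c) * (1 + r + k)) :
    qint r k n ≥ (n : ℝ) / c := by
  have hc₀ : (0 : ℝ) < c := Nat.cast_pos.2 (by omega)
  have hN : (2 : ℝ) ≤ 1 + r + k := by norm_cast; omega
  have hN₀ : (0 : ℝ) < 1 + r + k := by linarith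
  have hsin : 0 < sin (π / (1 + r + k)) := by
    apply sin_pos_of_pos_of_lt_pi (by positivity)
    rw [div_lt_iff₀ hN₀]
    nlinarith [pi_pos]
  have hnx : (n : ℝ) * (π / (1 + r + k)) ≤ π - π / c := by
    calc (n : ℝ) * (π / (1 + r + k)) = n / (1 + r + k) * π := by ring
      _ ≤ ((c - 1) / c) * π := by gcongr ?_ * π; rwa [div_le_iff₀ hN₀]
      _ = π - π / c := by field_simp
  have key := div_mul_sin_le_sin_mul (by positivity) (Nat.cast_nonneg n) hc₀ hnx
  rwa [qint, ge_iff_le, le_div_iff₀ hsin, mul_div_assoc]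

theorem qint_lower_bound (r k c : ℕ) (hr : 0 < r) (hk : 0 < k) (hc : 2 ≤ c)
    (n : ℕ) (hn1 : 1 ≤ n)
    (hn2 : (n : ℝ) ≤ (((c : ℝ) - 1) / c) * (1 + r + k)) :
    qint r k n ≥ (n : ℝ) / c :=
  qint_lower_bound_general r k c hr hc n hn2
end

section
/- For every real number x with 0 < x < π/10, one has sin(x)·sin(4x)² > sin(2x)²·sin(3x). -/
open Real

theorem sin_ineq (x : ℝ) (hx : 0 < x) (hx2 : x < Real.pi / 10) :
    Real.sin x * Real.sin (4 * x) ^ 2 > Real.sin (2 * x) ^ 2 * Real.sin (3 * x) := by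
  have hpi := Real.pi_pos
  have hs : 0 < Real.sin x :=
    Real.sin_pos_of_pos_of_lt_pi hx (by nlinarith)
  have hc : 0 < Real.cos x :=
    Real.cos_pos_of_mem_Ioo ⟨by nlinarith, by nlinarith⟩
  have hc5 : 0 < Real.cos (5 * x) :=
    Real.cos_pos_of_mem_Ioo ⟨by nlinarith, by nlinarith⟩
  have hp := Real.sin_sq_add_cos_sq x
  have key : Real.sin x * Real.sin (4 * x) ^ 2 - Real.sin (2 * x) ^ 2 * Real.sin (3 * x)
      = 4 * Real.sin x ^ 3 * Real.cos x * Real.cos (5 * x) := by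
    have h4 : (4:ℝ) * x = 2 * (2 * x) := by ring
    have h5 : (5:ℝ) * x = 2 * x + 3 * x := by ring
    rw [h4, h5, Real.cos_add, Real.sin_two_mul, Real.cos_two_mul, Real.sin_two_mul,
      Real.sin_three_mul, Real.cos_three_mul]
    linear_combination (4 * Real.sin x ^ 3 * Real.cos x ^ 2 *
      (8 * Real.cos x ^ 2 - 8 * Real.sin x ^ 2 + 2)) * hp
  nlinarith [mul_pos (mul_pos (pow_pos hs 3) hc) hc5]
end

section
/- For every integer N ≥ 13, one has sin(π/N)·sin(5π/N) > sin(2π/N)². -/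
open Real

theorem sin_ineq_N (N : ℕ) (hN : 13 ≤ N) :
    Real.sin (Real.pi / N) * Real.sin (5 * Real.pi / N) >
      Real.sin (2 * Real.pi / N) ^ 2 := by
  have hN' : (13 : ℝ) ≤ N := by exact_mod_cast hN
  have hNpos : (0 : ℝ) < N := by linarith
  set x : ℝ := Real.pi / N with hxdef
  have hx0 : 0 < x := div_pos Real.pi_pos hNpos
  have h2x : 2 * x < Real.pi / 6 := by
    have : x ≤ Real.pi / 13 := by
      apply div_le_div_of_nonneg_left Real.pi_pos.le (by norm_num) hN'
    nlinarith [Real.pi_pos]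
  have h2x0 : 0 < 2 * x := by linarith
  have hc : Real.sqrt 3 / 2 < Real.cos (2 * x) := by
    have := Real.cos_lt_cos_of_nonneg_of_le_pi (by linarith) (by linarith [Real.pi_pos]) h2x
    rwa [Real.cos_pi_div_six] at this
  have hc1 : Real.cos (2 * x) < 1 := by
    have := Real.cos_lt_cos_of_nonneg_of_le_pi (le_refl 0) (by linarith [Real.pi_pos]) h2x0
    rwa [Real.cos_zero] at this
  have e4 : Real.cos (4 * x) = 2 * Real.cos (2 * x) ^ 2 - 1 := by
    rw [show (4 : ℝ) * x = 2 * (2 * x) by ring, Real.cos_two_mul]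
  have e6 : Real.cos (6 * x) = 4 * Real.cos (2 * x) ^ 3 - 3 * Real.cos (2 * x) := by
    rw [show (6 : ℝ) * x = 3 * (2 * x) by ring, Real.cos_three_mul]
  have hp : Real.cos (4 * x) - Real.cos (6 * x) = 2 * (Real.sin x * Real.sin (5 * x)) := by
    rw [Real.cos_sub_cos, show (4 * x + 6 * x) / 2 = 5 * x by ring,
      show (4 * x - 6 * x) / 2 = -x by ring, Real.sin_neg]
    ring
  have hs : Real.sin (2 * x) ^ 2 = 1 / 2 - Real.cos (4 * x) / 2 := by
    rw [Real.sin_sq]; linarith [e4]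
  have h5 : 5 * Real.pi / N = 5 * x := by rw [hxdef]; ring
  have h2 : 2 * Real.pi / N = 2 * x := by rw [hxdef]; ring
  rw [h5, h2, hs]
  have hsq : Real.sqrt 3 ^ 2 = 3 := Real.sq_sqrt (by norm_num)
  nlinarith [hc, hc1, hp, e4, e6, Real.sqrt_nonneg 3,
    mul_pos (sub_pos.mpr hc1) (mul_pos (by nlinarith [Real.sqrt_nonneg 3] :
      (0:ℝ) < Real.cos (2*x) - Real.sqrt 3 / 2) (by nlinarith [Real.sqrt_nonneg 3] :
      (0:ℝ) < Real.cos (2*x) + Real.sqrt 3 / 2))]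
end
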